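/- arXiv:2312.11963 — 3 statements merged into one kernel-verified Lean document; each statement's English description precedes it below -/
import Mathlib

section
/- Let T = (V,E) be a finite tree and let A ⊆ V be a globally minimal defensive alliance of T. Then {v ∈ A : deg_A(v) = 1} = {v ∈ V : deg_V(v) ∈ {2,3}} ∩ A, where deg_V(v) denotes the degree of v in T. -/
/-! A globally minimal defensive alliance `A` of a tree contains no leaf unless `A` is that
single leaf, since a leaf alone is a defensive alliance. And no `v ∈ A` with a neighbour
`u ∈ A` can have more neighbours in `A` than outside: otherwise cutting the edge `uv` and
removing from `A` the whole side containing `u` leaves a smaller defensive alliance, because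
only `v` sees the change, losing one neighbour in `A` and gaining one outside.
For `v ∈ A` with `a` neighbours in `A` and `c` outside, these facts together with
`c ≤ a + 1` make `a = 1` equivalent to `a + c ∈ {2, 3}`. -/

/-- `degIn G X v` is the number of neighbors of `v` lying in the set `X`
(denoted `deg_X(v)` in the paper). -/
noncomputable def degIn {V : Type*} (G : SimpleGraph V) (X : Set V) (v : V) : ℕ :=
  {u | u ∈ X ∧ G.Adj v u}.ncard

/-- `A` is a defensive alliance of `G`: every `v ∈ A` satisfies
`deg_A(v) + 1 ≥ deg_{V∖A}(v)`. -/
def IsDefensiveAlliance {V : Type*} (G : SimpleGraph V) (A : Set V) : Prop :=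
  ∀ v ∈ A, degIn G A v + 1 ≥ degIn G Aᶜ v

/-- A nonempty defensive alliance is globally minimal if no nonempty proper
subset is a defensive alliance. -/
def IsGloballyMinimalDA {V : Type*} (G : SimpleGraph V) (A : Set V) : Prop :=
  A.Nonempty ∧ IsDefensiveAlliance G A ∧
    ∀ B : Set V, B ⊂ A → B.Nonempty → ¬ IsDefensiveAlliance G B

/-- A nonempty defensive alliance is locally minimal if for every `v ∈ A`,
the set `A ∖ {v}` is not a nonempty defensive alliance. -/
def IsLocallyMinimalDA {V : Type*} (G : SimpleGraph V) (A : Set V) : Prop :=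
  A.Nonempty ∧ IsDefensiveAlliance G A ∧
    ∀ v ∈ A, ¬ ((A \ {v}).Nonempty ∧ IsDefensiveAlliance G (A \ {v}))

open Set SimpleGraph

section degIn

variable {V : Type*} (G : SimpleGraph V)

lemma degIn_eq_ncard_inter_neighborSet (X : Set V) (v : V) :
    degIn G X v = (X ∩ G.neighborSet v).ncard := rfl

lemma degIn_congr {X Y : Set V} {v : V} (h : X ∩ G.neighborSet v = Y ∩ G.neighborSet v) :
    degIn G X v = degIn G Y v := by
  rw [degIn_eq_ncard_inter_neighborSet, h, ← degIn_eq_ncard_inter_neighborSet]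

lemma degIn_singleton_self (v : V) : degIn G {v} v = 0 := by
  rw [degIn_eq_ncard_inter_neighborSet, singleton_inter_eq_empty.2 (G.notMem_neighborSet_self),
    ncard_empty]

lemma degIn_compl_singleton_self (v : V) : degIn G {v}ᶜ v = degIn G univ v :=
  degIn_congr G <| by
    rw [univ_inter, inter_eq_right]
    exact subset_compl_singleton_iff.2 (G.notMem_neighborSet_self)

variable [G.LocallyFinite]

lemma degIn_add_degIn_compl (X : Set V) (v : V) :
    degIn G X v + degIn G Xᶜ v = degIn G univ v := by
  simp only [degIn_eq_ncard_inter_neighborSet]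
  rw [← ncard_union_eq (disjoint_compl_right.mono inter_subset_left inter_subset_left),
    ← union_inter_distrib_right, union_compl_self]

end degIn

section degIn_diff

variable {V : Type*} {G : SimpleGraph V} {X S : Set V} {u v : V}

lemma degIn_diff_of_forall_notMem (h : ∀ w, G.Adj v w → w ∉ S) :
    degIn G (X \ S) v = degIn G X v :=
  degIn_congr G <| by ext w; simp only [mem_inter_iff, mem_sdiff, mem_neighborSet]; grind

lemma degIn_compl_diff_of_forall_notMem (h : ∀ w, G.Adj v w → w ∉ S) :
    degIn G (X \ S)ᶜ v = degIn G Xᶜ v :=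
  degIn_congr G <| by
    ext w; simp only [mem_inter_iff, compl_sdiff, mem_union, mem_neighborSet]; grind

variable [G.LocallyFinite]

lemma degIn_diff_add_one (h : ∀ w, G.Adj v w → (w ∈ S ↔ w = u)) (hvu : G.Adj v u)
    (hu : u ∈ X) : degIn G (X \ S) v + 1 = degIn G X v := by
  have hdiff : (X \ S) ∩ G.neighborSet v = (X ∩ G.neighborSet v) \ {u} := by
    ext w; simp only [mem_inter_iff, mem_sdiff, mem_neighborSet, mem_singleton_iff]; grind
  rw [degIn_eq_ncard_inter_neighborSet, degIn_eq_ncard_inter_neighborSet, hdiff,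
    ncard_sdiff_singleton_add_one (show u ∈ X ∩ G.neighborSet v from ⟨hu, hvu⟩)]

lemma degIn_compl_diff (h : ∀ w, G.Adj v w → (w ∈ S ↔ w = u)) (hvu : G.Adj v u)
    (hu : u ∈ X) : degIn G (X \ S)ᶜ v = degIn G Xᶜ v + 1 := by
  have hinsert : (X \ S)ᶜ ∩ G.neighborSet v = insert u (Xᶜ ∩ G.neighborSet v) := by
    ext w; simp only [mem_inter_iff, compl_sdiff, mem_union, mem_insert_iff, mem_neighborSet]
    grind
  rw [degIn_eq_ncard_inter_neighborSet, degIn_eq_ncard_inter_neighborSet, hinsert,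
    ncard_insert_of_notMem fun h => h.1 hu]

end degIn_diff

namespace SimpleGraph.IsBridge

variable {V : Type*} {G : SimpleGraph V} {u v : V}

lemma exists_side (h : G.IsBridge s(v, u)) :
    ∃ S : Set V, u ∈ S ∧ v ∉ S ∧ ∀ w x, w ∉ S → x ∈ S → G.Adj w x → w = v ∧ x = u := by
  refine ⟨{w | (G.deleteEdges {s(v, u)}).Reachable u w}, Reachable.refl u,
    fun hv => isBridge_iff.1 h hv.symm, fun w x hw hx hwx => ?_⟩
  by_cases he : s(w, x) = s(v, u)
  · rcases Sym2.eq_iff.1 he with ⟨rfl, rfl⟩ | ⟨rfl, rfl⟩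
    · exact ⟨rfl, rfl⟩
    · exact absurd (Reachable.refl _) hw
  · have hxw : (G.deleteEdges {s(v, u)}).Adj x w :=
      deleteEdges_adj.2 ⟨hwx.symm, by simpa [Sym2.eq_swap] using he⟩
    exact absurd (hx.trans hxw.reachable) hw

end SimpleGraph.IsBridge

section alliance

variable {V : Type*} {G : SimpleGraph V} {A : Set V}

lemma isDefensiveAlliance_singleton_iff {v : V} :
    IsDefensiveAlliance G {v} ↔ degIn G univ v ≤ 1 := by
  simp [IsDefensiveAlliance, degIn_singleton_self, degIn_compl_singleton_self]

lemma IsDefensiveAlliance.diff_of_degIn_compl_lt [G.LocallyFinite] (hA : IsDefensiveAlliance G A)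
    {S : Set V} {u v : V} (huS : u ∈ S) (hvS : v ∉ S) (huA : u ∈ A) (hvu : G.Adj v u)
    (hcut : ∀ w x, w ∉ S → x ∈ S → G.Adj w x → w = v ∧ x = u)
    (hsurplus : degIn G Aᶜ v < degIn G A v) : IsDefensiveAlliance G (A \ S) := by
  rintro w ⟨hwA, hwS⟩
  by_cases hwv : w = v
  · subst hwv
    have hS : ∀ x, G.Adj w x → (x ∈ S ↔ x = u) :=
      fun x hwx => ⟨fun hx => (hcut w x hwS hx hwx).2, fun hx => hx ▸ huS⟩
    have := degIn_diff_add_one hS hvu huA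
    rw [degIn_compl_diff hS hvu huA]
    omega
  · have hS : ∀ x, G.Adj w x → x ∉ S := fun x hwx hx => hwv (hcut w x hwS hx hwx).1
    rw [degIn_diff_of_forall_notMem hS, degIn_compl_diff_of_forall_notMem hS]
    exact hA w hwA

namespace IsGloballyMinimalDA

lemma eq_singleton_of_degIn_univ_le_one (hA : IsGloballyMinimalDA G A) {v : V} (hv : v ∈ A)
    (hdeg : degIn G univ v ≤ 1) : A = {v} := by
  by_contra hne
  exact hA.2.2 {v} ((singleton_subset_iff.2 hv).ssubset_of_ne (Ne.symm hne))
    (singleton_nonempty v) (isDefensiveAlliance_singleton_iff.2 hdeg)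

lemma degIn_le_degIn_compl [G.LocallyFinite] (hG : G.IsAcyclic) (hA : IsGloballyMinimalDA G A)
    {v : V} (hv : v ∈ A) (hpos : 0 < degIn G A v) : degIn G A v ≤ degIn G Aᶜ v := by
  by_contra! hsurplus
  obtain ⟨u, huA, hvu⟩ : ∃ u ∈ A, G.Adj v u := nonempty_of_ncard_ne_zero hpos.ne'
  obtain ⟨S, huS, hvS, hcut⟩ := (isAcyclic_iff_forall_adj_isBridge.1 hG hvu).exists_side
  exact hA.2.2 (A \ S) ⟨sdiff_subset, fun h => (h huA).2 huS⟩ ⟨v, hv, hvS⟩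
    (hA.2.1.diff_of_degIn_compl_lt huS hvS huA hvu hcut hsurplus)

end IsGloballyMinimalDA

end alliance

/-- In a finite tree `T`, for every globally minimal defensive
alliance `A` one has
`{v ∈ A : deg_A(v) = 1} = {v ∈ V : deg_V(v) ∈ {2,3}} ∩ A`. -/
theorem globallyMinimalDA_tree_degree_one {V : Type*} [Fintype V]
    (T : SimpleGraph V) (hT : T.IsTree) (A : Set V)
    (hA : IsGloballyMinimalDA T A) :
    {v ∈ A | degIn T A v = 1} =
      {v | degIn T Set.univ v = 2 ∨ degIn T Set.univ v = 3} ∩ A := by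
  classical
  ext v
  by_cases hv : v ∈ A
  · have hsum := degIn_add_degIn_compl T A v
    have hdef := hA.2.1 v hv
    have hleaf : degIn T univ v ≤ 1 → degIn T A v = 0 := fun hdeg => by
      rw [hA.eq_singleton_of_degIn_univ_le_one hv hdeg, degIn_singleton_self]
    have hbalance := hA.degIn_le_degIn_compl hT.isAcyclic hv
    simp only [mem_ofPred_eq, mem_inter_iff, hv, true_and, and_true]
    omega
  · simp [hv]
end

section
/- Let k ≥ 1 and let T be the tree with vertex set {a,b,c} ∪ {v_1,…,v_k} and edges {a,b}, {b,c}, and {a,v_i} for 1 ≤ i ≤ k. For every subset A′ ⊆ {v_1,…,v_k} with |A′| = ⌈(k−2)/2⌉, the set A = {a,b} ∪ A′ is a locally minimal defensive alliance of T. -/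
/-- The caterpillar tree with spine `a = Sum.inl 0`, `b = Sum.inl 1`,
`c = Sum.inl 2` and leaves `v_i = Sum.inr i`; edges `{a,b}`, `{b,c}` and
`{a, v_i}` for `1 ≤ i ≤ k`. -/
def caterpillarTree (k : ℕ) : SimpleGraph (Fin 3 ⊕ Fin k) :=
  SimpleGraph.fromRel (fun x y =>
    (x = Sum.inl 0 ∧ y = Sum.inl 1) ∨
    (x = Sum.inl 1 ∧ y = Sum.inl 2) ∨
    (∃ i : Fin k, x = Sum.inl 0 ∧ y = Sum.inr i))

/-!
The identity `deg_X(v) + deg_{V∖X}(v) = deg(v)` turns the alliance condition at `v` into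
`deg(v) ≤ 2 deg_X(v) + 1`. For `A = {a, b} ∪ A'` this holds at `a` since `k + 1 ≤ 2|A'| + 3`,
at `b` since `a ∈ A`, and trivially at the leaves. Removing `a` leaves `b` with no neighbour in
the set; removing `b` or a leaf of `A'` costs `a` one neighbour in the set, and `2|A'| < k` then
breaks the condition at `a`.
-/

section

variable {V : Type*} {G : SimpleGraph V} {X : Set V} {u v : V}

theorem degIn_eq_ncard_neighborSet_inter : degIn G X v = (G.neighborSet v ∩ X).ncard := by
  rw [degIn, Set.inter_comm]
  rfl

theorem degIn_add_degIn_compl_s9 (h : (G.neighborSet v).Finite) :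
    degIn G X v + degIn G Xᶜ v = (G.neighborSet v).ncard := by
  rw [degIn_eq_ncard_neighborSet_inter, degIn_eq_ncard_neighborSet_inter, ← Set.sdiff_eq,
    Set.ncard_inter_add_ncard_sdiff_eq_ncard _ _ h]

theorem degIn_compl_le_degIn_add_one_iff (h : (G.neighborSet v).Finite) :
    degIn G Xᶜ v ≤ degIn G X v + 1 ↔ (G.neighborSet v).ncard ≤ 2 * degIn G X v + 1 := by
  have := degIn_add_degIn_compl_s9 (X := X) h
  omega

theorem degIn_sdiff_singleton_add_one (h : (G.neighborSet v).Finite) (hu : u ∈ X)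
    (hvu : G.Adj v u) : degIn G (X \ {u}) v + 1 = degIn G X v := by
  rw [degIn_eq_ncard_neighborSet_inter, degIn_eq_ncard_neighborSet_inter,
    ← Set.inter_sdiff_assoc]
  exact Set.ncard_sdiff_singleton_add_one ⟨hvu, hu⟩ (h.subset Set.inter_subset_left)

theorem not_isDefensiveAlliance_sdiff_singleton (h : (G.neighborSet v).Finite) (hv : v ∈ X)
    (hu : u ∈ X) (hvu : G.Adj v u) (hdeg : 2 * degIn G X v ≤ (G.neighborSet v).ncard) :
    ¬ IsDefensiveAlliance G (X \ {u}) := fun hX => by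
  have hv' := hX v ⟨hv, hvu.ne⟩
  rw [ge_iff_le, degIn_compl_le_degIn_add_one_iff h] at hv'
  have := degIn_sdiff_singleton_add_one h hu hvu
  omega

end

namespace caterpillarTree

variable {k : ℕ}

theorem adj_iff {x y : Fin 3 ⊕ Fin k} : (caterpillarTree k).Adj x y ↔
      (x = Sum.inl 0 ∧ y = Sum.inl 1) ∨ (x = Sum.inl 1 ∧ y = Sum.inl 0) ∨
      (x = Sum.inl 1 ∧ y = Sum.inl 2) ∨ (x = Sum.inl 2 ∧ y = Sum.inl 1) ∨
      (∃ i, x = Sum.inl 0 ∧ y = Sum.inr i) ∨ (∃ i, x = Sum.inr i ∧ y = Sum.inl 0) := by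
  simp only [caterpillarTree, SimpleGraph.fromRel_adj]
  constructor
  · rintro ⟨-, (⟨rfl, rfl⟩ | ⟨rfl, rfl⟩ | ⟨i, rfl, rfl⟩) |
      (⟨rfl, rfl⟩ | ⟨rfl, rfl⟩ | ⟨i, rfl, rfl⟩)⟩ <;> simp
  · rintro (⟨rfl, rfl⟩ | ⟨rfl, rfl⟩ | ⟨rfl, rfl⟩ | ⟨rfl, rfl⟩ | ⟨i, rfl, rfl⟩ |
      ⟨i, rfl, rfl⟩) <;> simp

theorem neighborSet_inl_zero :
    (caterpillarTree k).neighborSet (Sum.inl 0) = insert (Sum.inl 1) (Set.range Sum.inr) := by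
  ext u
  simp [adj_iff, eq_comm]

theorem neighborSet_inl_one :
    (caterpillarTree k).neighborSet (Sum.inl 1) = {Sum.inl 0, Sum.inl 2} := by
  ext u
  simp [adj_iff]

theorem neighborSet_inr (i : Fin k) :
    (caterpillarTree k).neighborSet (Sum.inr i) = {Sum.inl 0} := by
  ext u
  simp [adj_iff]

theorem ncard_neighborSet_inl_zero :
    ((caterpillarTree k).neighborSet (Sum.inl 0)).ncard = k + 1 := by
  rw [neighborSet_inl_zero, Set.ncard_insert_of_notMem (by simp),
    Set.ncard_range_of_injective Sum.inr_injective, Nat.card_eq_fintype_card, Fintype.card_fin]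

theorem ncard_neighborSet_inl_one : ((caterpillarTree k).neighborSet (Sum.inl 1)).ncard = 2 := by
  rw [neighborSet_inl_one, Set.ncard_pair (by simp)]

theorem ncard_neighborSet_inr (i : Fin k) :
    ((caterpillarTree k).neighborSet (Sum.inr i)).ncard = 1 := by
  rw [neighborSet_inr, Set.ncard_singleton]

variable (A' : Set (Fin k))

theorem degIn_inl_zero :
    degIn (caterpillarTree k) ({Sum.inl 0, Sum.inl 1} ∪ Sum.inr '' A') (Sum.inl 0) =
      A'.ncard + 1 := by
  have : (caterpillarTree k).neighborSet (Sum.inl 0) ∩ ({Sum.inl 0, Sum.inl 1} ∪ Sum.inr '' A') =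
      insert (Sum.inl 1) (Sum.inr '' A') := by
    ext u
    simp only [neighborSet_inl_zero, Set.mem_inter_iff, Set.mem_insert_iff, Set.mem_range,
      Set.mem_union, Set.mem_singleton_iff, Set.mem_image]
    aesop
  rw [degIn_eq_ncard_neighborSet_inter, this, Set.ncard_insert_of_notMem (by simp),
    Set.ncard_image_of_injective _ Sum.inr_injective]

theorem degIn_inl_one :
    degIn (caterpillarTree k) ({Sum.inl 0, Sum.inl 1} ∪ Sum.inr '' A') (Sum.inl 1) = 1 := by
  have : (caterpillarTree k).neighborSet (Sum.inl 1) ∩ ({Sum.inl 0, Sum.inl 1} ∪ Sum.inr '' A') =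
      {Sum.inl 0} := by
    ext u
    simp only [neighborSet_inl_one, Set.mem_inter_iff, Set.mem_insert_iff, Set.mem_singleton_iff,
      Set.mem_union, Set.mem_image]
    aesop
  rw [degIn_eq_ncard_neighborSet_inter, this, Set.ncard_singleton]

end caterpillarTree

open caterpillarTree

/-- For `k ≥ 1` and every `A' ⊆ {v_1,…,v_k}` with
`|A'| = ⌈(k-2)/2⌉`, the set `{a,b} ∪ A'` is a locally minimal defensive
alliance of the caterpillar tree. -/
theorem locallyMinimalDA_caterpillar (k : ℕ) (hk : 1 ≤ k)
    (A' : Set (Fin k)) (hcard : A'.ncard = (k - 2 + 1) / 2) :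
    IsLocallyMinimalDA (caterpillarTree k)
      ({Sum.inl 0, Sum.inl 1} ∪ (Sum.inr '' A')) := by
  have hA' : 2 * A'.ncard < k := by omega
  refine ⟨⟨Sum.inl 0, by simp⟩, ?_, ?_⟩
  · rintro v hv
    rw [ge_iff_le, degIn_compl_le_degIn_add_one_iff (Set.toFinite _)]
    rcases hv with (rfl | rfl) | ⟨i, -, rfl⟩
    · rw [ncard_neighborSet_inl_zero, degIn_inl_zero]
      omega
    · rw [ncard_neighborSet_inl_one, degIn_inl_one]
      omega
    · rw [ncard_neighborSet_inr]
      omega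
  · rintro v hv ⟨-, hDA⟩
    by_cases hva : v = Sum.inl 0
    · subst hva
      refine not_isDefensiveAlliance_sdiff_singleton (v := Sum.inl 1) (Set.toFinite _) (by simp) hv
        (adj_iff.2 (by simp)) ?_ hDA
      rw [degIn_inl_one, ncard_neighborSet_inl_one]
    · have hadj : (caterpillarTree k).Adj (Sum.inl 0) v := by
        rcases hv with (rfl | rfl) | ⟨i, -, rfl⟩ <;> simp_all [adj_iff]
      refine not_isDefensiveAlliance_sdiff_singleton (Set.toFinite _) (by simp) hv hadj ?_ hDA
      rw [degIn_inl_zero, ncard_neighborSet_inl_zero]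
      omega
end

section
/- Define the sequence f by f_1 = 0, f_2 = 1, f_3 = 2 and f_n = f_{n−1} + f_{n−3} + 1 for n ≥ 4. For every n ≥ 3, the number of locally minimal defensive alliances of the path P_n equals f_{n−2} + 2. -/
/-!
On a path only the interior vertices, of degree 2, constrain a defensive alliance: each must have
a neighbour in it. A locally minimal alliance `B` other than the two end singletons has at least
two vertices, and then every `v ∈ B` has a dependent `w ∈ B`, an interior neighbour whose only
neighbour in `B` is `v` (this is what makes `B \ {v}` fail). The dependent of a dependent of `v`
is `v` again, so all of `B` is interior; and if `i, i + 1, i + 2 ∈ B` the dependent of `i` must be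
`i - 1`, so by descent `B` has no three consecutive vertices. Hence `B` is a union of dominoes
`{i, i + 1}` (vertices are `0, …, n - 1`) whose left ends lie in `[1, n - 3]` at mutual distance at
least 3, and every such union is locally minimal. The number `c m` of such sets of left ends in
`[1, m]` satisfies `c (m + 1) = c m + c (m - 2)` (split on `m + 1`), so `c m = f (m + 1) + 1`.
-/

open scoped Finset

section LocallyMinimal

variable {α β : Type*}

def IsLocallyMinimal (P : Set α → Prop) (A : Set α) : Prop :=
  A.Nonempty ∧ P A ∧ ∀ a ∈ A, ¬((A \ {a}).Nonempty ∧ P (A \ {a}))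

theorem isLocallyMinimal_singleton {P : Set α → Prop} {a : α} (h : P {a}) :
    IsLocallyMinimal P {a} :=
  ⟨Set.singleton_nonempty a, h, by simp⟩

theorem isLocallyMinimal_image_iff {f : α → β} (hf : f.Injective) {P : Set α → Prop}
    {Q : Set β → Prop} (hPQ : ∀ A, P A ↔ Q (f '' A)) (A : Set α) :
    IsLocallyMinimal Q (f '' A) ↔ IsLocallyMinimal P A := by
  unfold IsLocallyMinimal
  rw [Set.image_nonempty, ← hPQ, Set.forall_mem_image]
  refine and_congr_right' (and_congr_right' (forall₂_congr fun a _ => ?_))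
  rw [← Set.image_singleton, ← Set.image_sdiff hf, Set.image_nonempty, hPQ]

theorem natCard_subtype_image_eq_ncard {f : α → β} (hf : f.Injective) (Q : Set β → Prop) :
    Nat.card {A : Set α // Q (f '' A)} = {B : Set β | B ⊆ Set.range f ∧ Q B}.ncard := by
  change Nat.card {A : Set α | Q (f '' A)} = _
  rw [Nat.card_coe_set_eq, ← Set.ncard_image_of_injective _ (Set.image_injective.2 hf)]
  congr 1
  ext B
  constructor
  · rintro ⟨A, hA, rfl⟩
    exact ⟨Set.image_subset_range f A, hA⟩
  · rintro ⟨hB, hQ⟩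
    exact ⟨f ⁻¹' B, show Q _ by rwa [Set.image_preimage_eq_of_subset hB],
      Set.image_preimage_eq_of_subset hB⟩

end LocallyMinimal

section DefensiveAlliance

variable {V : Type*} (G : SimpleGraph V) {v : V}

theorem degIn_eq_ncard_inter (X : Set V) (v : V) :
    degIn G X v = (G.neighborSet v ∩ X).ncard := by
  rw [Set.inter_comm]; rfl

theorem degIn_compl_le_of_subsingleton (hv : (G.neighborSet v).Subsingleton) (A : Set V) :
    degIn G Aᶜ v ≤ degIn G A v + 1 := by
  have hs : (G.neighborSet v ∩ Aᶜ).Subsingleton := hv.anti Set.inter_subset_left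
  rw [degIn_eq_ncard_inter]
  exact ((Set.ncard_le_one hs.finite).2 fun _ ha _ hb => hs ha hb).trans le_add_self

theorem degIn_compl_le_iff_of_neighborSet_eq_pair {a b : V} (hab : a ≠ b)
    (hv : G.neighborSet v = {a, b}) (A : Set V) :
    degIn G Aᶜ v ≤ degIn G A v + 1 ↔ ∃ u ∈ A, G.Adj v u := by
  have hadj : (∃ u ∈ A, G.Adj v u) ↔ a ∈ A ∨ b ∈ A := by
    simp only [← G.mem_neighborSet, hv, Set.mem_insert_iff, Set.mem_singleton_iff, and_or_left,
      exists_or, exists_eq_right]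
  rw [hadj, degIn_eq_ncard_inter, degIn_eq_ncard_inter, hv]
  by_cases ha : a ∈ A <;> by_cases hb : b ∈ A <;>
    simp [ha, hb, Set.ncard_pair hab, Set.insert_inter_of_mem, Set.insert_inter_of_notMem,
      Set.singleton_inter_of_mem, Set.singleton_inter_of_notMem]

end DefensiveAlliance

def IsPathAlliance (n : ℕ) (B : Set ℕ) : Prop :=
  ∀ i ∈ B, 0 < i → i + 1 < n → ∃ j ∈ B, i + 1 = j ∨ j + 1 = i

open SimpleGraph

theorem pathGraph_neighborSet_eq_pair {n : ℕ} {v : Fin n} (h0 : 0 < (v : ℕ))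
    (h1 : (v : ℕ) + 1 < n) : (pathGraph n).neighborSet v = {⟨v - 1, by omega⟩, ⟨v + 1, h1⟩} := by
  ext u
  simp only [mem_neighborSet, pathGraph_adj, Set.mem_insert_iff, Set.mem_singleton_iff,
    Fin.ext_iff]
  omega

theorem pathGraph_neighborSet_subsingleton {n : ℕ} {v : Fin n}
    (hv : (v : ℕ) = 0 ∨ (v : ℕ) + 1 = n) : ((pathGraph n).neighborSet v).Subsingleton := by
  intro a ha b hb
  simp only [mem_neighborSet, pathGraph_adj] at ha hb
  ext
  omega

theorem isDefensiveAlliance_pathGraph_iff {n : ℕ} (A : Set (Fin n)) :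
    IsDefensiveAlliance (pathGraph n) A ↔ IsPathAlliance n (Fin.val '' A) := by
  simp only [IsDefensiveAlliance, IsPathAlliance, Set.forall_mem_image, Set.exists_mem_image,
    ge_iff_le]
  refine forall₂_congr fun v _ => ?_
  by_cases hv : 0 < (v : ℕ) ∧ (v : ℕ) + 1 < n
  · rw [degIn_compl_le_iff_of_neighborSet_eq_pair _ (by simp [Fin.ext_iff])
      (pathGraph_neighborSet_eq_pair hv.1 hv.2)]
    simp [pathGraph_adj, hv]
  · exact iff_of_true (degIn_compl_le_of_subsingleton _ (pathGraph_neighborSet_subsingleton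
      (by omega)) A) fun h0 h1 => absurd ⟨h0, h1⟩ hv

theorem natCard_isLocallyMinimalDA_pathGraph (n : ℕ) :
    Nat.card {A : Set (Fin n) // IsLocallyMinimalDA (pathGraph n) A} =
      {B : Set ℕ | B ⊆ Set.Iio n ∧ IsLocallyMinimal (IsPathAlliance n) B}.ncard := by
  change Nat.card {A // IsLocallyMinimal (IsDefensiveAlliance (pathGraph n)) A} = _
  rw [← Fin.range_val, ← natCard_subtype_image_eq_ncard Fin.val_injective]
  simp only [isLocallyMinimal_image_iff Fin.val_injective isDefensiveAlliance_pathGraph_iff]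

def IsSpaced (S : Finset ℕ) : Prop :=
  ∀ i ∈ S, ∀ j ∈ S, i < j → i + 3 ≤ j

instance : DecidablePred IsSpaced := fun S => by unfold IsSpaced; infer_instance

theorem IsSpaced.eq_of_lt_add_three {S : Finset ℕ} (hS : IsSpaced S) {i j : ℕ} (hi : i ∈ S)
    (hj : j ∈ S) (hij : i < j + 3) (hji : j < i + 3) : i = j := by
  rcases lt_trichotomy i j with h | h | h
  · have := hS i hi j hj h; omega
  · exact h
  · have := hS j hj i hi h; omega

def dominoes (S : Finset ℕ) : Set ℕ := ↑S ∪ (· + 1) '' ↑S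

theorem mem_dominoes {S : Finset ℕ} {i : ℕ} :
    i ∈ dominoes S ↔ i ∈ S ∨ ∃ j ∈ S, j + 1 = i := by
  simp [dominoes]

theorem dominoes_subset_Icc {S : Finset ℕ} {m : ℕ} (hS : S ⊆ Finset.Icc 1 m) :
    dominoes S ⊆ Set.Icc 1 (m + 1) := by
  rintro i hi
  rcases mem_dominoes.1 hi with hi | ⟨j, hj, rfl⟩
  · have := Finset.mem_Icc.1 (hS hi); exact ⟨by omega, by omega⟩
  · have := Finset.mem_Icc.1 (hS hj); exact ⟨by omega, by omega⟩

theorem dominoes_nontrivial {S : Finset ℕ} (hS : S.Nonempty) : (dominoes S).Nontrivial :=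
  let ⟨j, hj⟩ := hS
  ⟨j, mem_dominoes.2 (.inl hj), j + 1, mem_dominoes.2 (.inr ⟨j, hj, rfl⟩), by omega⟩

theorem IsSpaced.eq_or_eq_add_one_of_mem_dominoes {S : Finset ℕ} (hS : IsSpaced S) {j k : ℕ}
    (hj : j ∈ S) (hk : k ∈ dominoes S) (h1 : j ≤ k + 1) (h2 : k ≤ j + 2) :
    k = j ∨ k = j + 1 := by
  rcases mem_dominoes.1 hk with hk | ⟨l, hl, rfl⟩
  · exact .inl (hS.eq_of_lt_add_three hk hj (by omega) (by omega))
  · exact .inr (by rw [hS.eq_of_lt_add_three hl hj (by omega) (by omega)])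

theorem IsSpaced.dominoes_injOn : Set.InjOn dominoes {S | IsSpaced S} := by
  have hsub : ∀ S T : Finset ℕ, IsSpaced S → dominoes S = dominoes T → S ⊆ T := by
    intro S T hS hST i hi
    rcases mem_dominoes.1 (hST ▸ mem_dominoes.2 (.inl hi)) with hi' | ⟨l, hl, rfl⟩
    · exact hi'
    · have hl' : l ∈ dominoes S := hST ▸ mem_dominoes.2 (.inl hl)
      have := hS.eq_or_eq_add_one_of_mem_dominoes hi hl' (by omega) (by omega)
      omega
  exact fun S hS T hT hST => (hsub S T hS hST).antisymm (hsub T S hT hST.symm)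

theorem exists_eq_dominoes {m : ℕ} {B : Set ℕ} (hB : B ⊆ Set.Icc 1 m)
    (hnbr : ∀ i ∈ B, ∃ j ∈ B, i + 1 = j ∨ j + 1 = i) (h3 : ∀ i ∈ B, i + 1 ∈ B → i + 2 ∉ B) :
    ∃ S : Finset ℕ, S ⊆ Finset.Icc 1 (m - 1) ∧ IsSpaced S ∧ B = dominoes S := by
  classical
  have hsucc : ∀ i ∈ B, i - 1 ∉ B → i + 1 ∈ B := by
    intro i hi hi'
    obtain ⟨j, hj, rfl | rfl⟩ := hnbr i hi
    · exact hj
    · exact absurd hj (by simpa using hi')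
  refine ⟨(Finset.Icc 1 (m - 1)).filter fun i => i ∈ B ∧ i - 1 ∉ B, Finset.filter_subset _ _,
    ?_, ?_⟩
  · intro i hi j hj hij
    simp only [Finset.mem_filter] at hi hj
    have hi1 := hsucc i hi.2.1 hi.2.2
    by_contra! h
    obtain rfl | rfl : j = i + 1 ∨ j = i + 2 := by omega
    · exact hj.2.2 (by simpa using hi.2.1)
    · exact hj.2.2 (by simpa using hi1)
  · ext i
    simp only [mem_dominoes, Finset.mem_filter, Finset.mem_Icc]
    constructor
    · intro hi
      obtain ⟨hi1, him⟩ := hB hi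
      by_cases hp : i - 1 ∈ B
      · obtain ⟨hp1, -⟩ := hB hp
        obtain ⟨k, rfl⟩ : ∃ k, i = k + 2 := ⟨i - 2, by omega⟩
        exact .inr ⟨k + 1, ⟨⟨by omega, by omega⟩, hp, fun hk => h3 k hk hp hi⟩, rfl⟩
      · obtain ⟨-, hsm⟩ := hB (hsucc i hi hp)
        exact .inl ⟨⟨hi1, by omega⟩, hi, hp⟩
    · rintro (⟨-, hi, -⟩ | ⟨j, ⟨-, hj, hj'⟩, rfl⟩)
      · exact hi
      · exact hsucc j hj hj'

def spacedSubsets (m : ℕ) : Finset (Finset ℕ) := (Finset.Icc 1 m).powerset.filter IsSpaced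

theorem mem_spacedSubsets {m : ℕ} {S : Finset ℕ} :
    S ∈ spacedSubsets m ↔ S ⊆ Finset.Icc 1 m ∧ IsSpaced S := by
  simp [spacedSubsets]

section PathAlliance

variable {n : ℕ} {B : Set ℕ}

theorem IsLocallyMinimal.exists_dependent (hB : IsLocallyMinimal (IsPathAlliance n) B) {i : ℕ}
    (hi : i ∈ B) (hne : (B \ {i}).Nonempty) :
    ∃ j ∈ B, 0 < j ∧ j + 1 < n ∧ (j + 1 = i ∨ i + 1 = j) ∧
      ∀ k ∈ B, j + 1 = k ∨ k + 1 = j → k = i := by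
  have hfail : ¬IsPathAlliance n (B \ {i}) := fun h => hB.2.2 i hi ⟨hne, h⟩
  simp only [IsPathAlliance, not_forall, not_exists, not_and] at hfail
  obtain ⟨j, ⟨hj, hji⟩, hj0, hjn, hnone⟩ := hfail
  have honly : ∀ k ∈ B, j + 1 = k ∨ k + 1 = j → k = i := fun k hk hjk =>
    by_contra fun hki => hnone k ⟨hk, hki⟩ hjk
  obtain ⟨k, hk, hjk⟩ := hB.2.1 j hj hj0 hjn
  obtain rfl := honly k hk hjk
  exact ⟨j, hj, hj0, hjn, by omega, honly⟩

theorem IsLocallyMinimal.pos_and_add_one_lt (hB : IsLocallyMinimal (IsPathAlliance n) B)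
    (hnt : B.Nontrivial) {i : ℕ} (hi : i ∈ B) : 0 < i ∧ i + 1 < n := by
  have hne : ∀ x, (B \ {x}).Nonempty := fun x => hnt.exists_ne x
  obtain ⟨j, hj, -, -, hji, honly⟩ := hB.exists_dependent hi (hne i)
  obtain ⟨k, hk, hk0, hkn, hkj, -⟩ := hB.exists_dependent hj (hne j)
  obtain rfl := honly k hk (by omega)
  exact ⟨hk0, hkn⟩

theorem IsLocallyMinimal.not_three_consecutive (hB : IsLocallyMinimal (IsPathAlliance n) B)
    (hnt : B.Nontrivial) (i : ℕ) : i ∈ B → i + 1 ∈ B → i + 2 ∉ B := by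
  induction i with
  | zero => exact fun h0 _ _ => (hB.pos_and_add_one_lt hnt h0).1.ne rfl
  | succ i ih =>
    intro h1 h2 h3
    obtain ⟨k, hk, -, -, hki, honly⟩ := hB.exists_dependent h1 (hnt.exists_ne _)
    obtain rfl : k = i := by
      by_contra hne
      have := honly (i + 3) h3 (by omega)
      omega
    exact ih hk h1 h2

theorem IsLocallyMinimal.eq_dominoes_of_nontrivial (hB : IsLocallyMinimal (IsPathAlliance n) B)
    (hnt : B.Nontrivial) : ∃ S ∈ spacedSubsets (n - 3), S.Nonempty ∧ B = dominoes S := by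
  have hint := fun i (hi : i ∈ B) => hB.pos_and_add_one_lt hnt hi
  obtain ⟨S, hS, hsp, rfl⟩ := exists_eq_dominoes (m := n - 2)
    (fun i hi => have := hint i hi; ⟨by omega, by omega⟩)
    (fun i hi => hB.2.1 i hi (hint i hi).1 (hint i hi).2) (hB.not_three_consecutive hnt)
  refine ⟨S, mem_spacedSubsets.2 ⟨hS, hsp⟩, ?_, rfl⟩
  exact Finset.nonempty_iff_ne_empty.2 fun h => by simp [h, dominoes] at hnt

theorem isLocallyMinimal_dominoes {S : Finset ℕ} (hS : S ⊆ Finset.Icc 1 (n - 3))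
    (hsp : IsSpaced S) (hne : S.Nonempty) : IsLocallyMinimal (IsPathAlliance n) (dominoes S) := by
  refine ⟨hne.imp fun j hj => mem_dominoes.2 (.inl hj), ?_, ?_⟩
  · rintro i hi - -
    rcases mem_dominoes.1 hi with hi | ⟨j, hj, rfl⟩
    · exact ⟨i + 1, mem_dominoes.2 (.inr ⟨i, hi, rfl⟩), .inl rfl⟩
    · exact ⟨j, mem_dominoes.2 (.inl hj), .inr rfl⟩
  · rintro i hi ⟨-, hDA⟩
    obtain ⟨j, hj, hij⟩ : ∃ j ∈ S, i = j ∨ i = j + 1 := by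
      rcases mem_dominoes.1 hi with hi | ⟨j, hj, rfl⟩
      exacts [⟨i, hi, .inl rfl⟩, ⟨j, hj, .inr rfl⟩]
    have hjn := Finset.mem_Icc.1 (hS hj)
    -- the other half `p` of the domino of `i` has no neighbour in `dominoes S` besides `i`
    have stranded : ∀ p ∈ dominoes S, (p = j ∨ p = j + 1) → p ≠ i → False := by
      intro p hp hpj hpi
      obtain ⟨q, ⟨hq, hqi⟩, hpq⟩ := hDA p ⟨hp, hpi⟩ (by omega) (by omega)
      have hqi : q ≠ i := hqi
      have := hsp.eq_or_eq_add_one_of_mem_dominoes hj hq (by omega) (by omega)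
      omega
    rcases hij with rfl | rfl
    · exact stranded (i + 1) (mem_dominoes.2 (.inr ⟨i, hj, rfl⟩)) (.inr rfl) (by omega)
    · exact stranded j (mem_dominoes.2 (.inl hj)) (.inl rfl) (by omega)

theorem isLocallyMinimal_pathAlliance_iff (hB : B ⊆ Set.Iio n) :
    IsLocallyMinimal (IsPathAlliance n) B ↔
      B = {0} ∨ B = {n - 1} ∨ ∃ S ∈ spacedSubsets (n - 3), S.Nonempty ∧ B = dominoes S := by
  constructor
  · intro hLM
    rcases hLM.1.exists_eq_singleton_or_nontrivial with ⟨c, rfl⟩ | hnt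
    · have hc : c < n := hB rfl
      by_cases hint : 0 < c ∧ c + 1 < n
      · obtain ⟨j, rfl, hj⟩ := hLM.2.1 c rfl hint.1 hint.2
        omega
      · rcases Nat.eq_zero_or_pos c with rfl | hc0
        · exact .inl rfl
        · exact .inr (.inl (by rw [show c = n - 1 by omega]))
    · exact .inr (.inr (hLM.eq_dominoes_of_nontrivial hnt))
  · rintro (rfl | rfl | ⟨S, hS, hne, rfl⟩)
    · exact isLocallyMinimal_singleton fun i hi h0 _ => absurd hi h0.ne'
    · exact isLocallyMinimal_singleton fun i hi _ h1 => by
        rw [Set.mem_singleton_iff.1 hi] at h1; omega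
    · obtain ⟨hS, hsp⟩ := mem_spacedSubsets.1 hS
      exact isLocallyMinimal_dominoes hS hsp hne

end PathAlliance

theorem Finset.card_filter_powerset_insert {α : Type*} [DecidableEq α] {a : α} {s : Finset α}
    (ha : a ∉ s) (p : Finset α → Prop) [DecidablePred p] :
    #((insert a s).powerset.filter p) =
      #(s.powerset.filter p) + #(s.powerset.filter fun t => p (insert a t)) := by
  rw [powerset_insert, filter_union, filter_image, card_union_of_disjoint, card_image_of_injOn]
  · exact insert_erase_invOn.2.injOn.mono fun t ht =>
      notMem_mono (mem_powerset.1 (mem_filter.1 ht).1) ha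
  · refine disjoint_left.2 fun t ht ht' => ?_
    obtain ⟨u, -, rfl⟩ := mem_image.1 ht'
    exact ha (mem_powerset.1 (mem_filter.1 ht).1 (mem_insert_self a u))

theorem IsSpaced.mono {S T : Finset ℕ} (hT : IsSpaced T) (h : S ⊆ T) : IsSpaced S :=
  fun i hi j hj => hT i (h hi) j (h hj)

-- For `m < 2` the truncated `m - 2 = 0` is still right: `{m + 1}` is the only spaced subset
-- of `[1, m + 1]` containing `m + 1`.
theorem card_spacedSubsets_succ (m : ℕ) :
    #(spacedSubsets (m + 1)) = #(spacedSubsets m) + #(spacedSubsets (m - 2)) := by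
  have hIcc : Finset.Icc 1 (m + 1) = insert (m + 1) (Finset.Icc 1 m) := by
    ext; simp only [Finset.mem_Icc, Finset.mem_insert]; omega
  rw [spacedSubsets, hIcc, Finset.card_filter_powerset_insert (by simp)]
  congr 2
  ext t
  simp only [Finset.mem_filter, Finset.mem_powerset, mem_spacedSubsets]
  constructor
  · rintro ⟨ht, hsp⟩
    refine ⟨fun i hi => ?_, hsp.mono (Finset.subset_insert _ _)⟩
    have := Finset.mem_Icc.1 (ht hi)
    have := hsp i (Finset.mem_insert_of_mem hi) (m + 1) (Finset.mem_insert_self _ _) (by omega)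
    exact Finset.mem_Icc.2 ⟨by omega, by omega⟩
  · rintro ⟨ht, hsp⟩
    refine ⟨ht.trans (Finset.Icc_subset_Icc_right (by omega)), ?_⟩
    intro i hi j hj hij
    rcases Finset.mem_insert.1 hi with rfl | hi <;> rcases Finset.mem_insert.1 hj with rfl | hj
    · omega
    · have := Finset.mem_Icc.1 (ht hj); omega
    · have := Finset.mem_Icc.1 (ht hi); omega
    · exact hsp i hi j hj hij

theorem card_spacedSubsets_eq (f : ℕ → ℕ) (h1 : f 1 = 0) (h2 : f 2 = 1) (h3 : f 3 = 2)
    (hrec : ∀ n, 4 ≤ n → f n = f (n - 1) + f (n - 3) + 1) :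
    ∀ m, #(spacedSubsets m) = f (m + 1) + 1
  | 0 => by rw [h1]; rfl
  | 1 => by rw [card_spacedSubsets_succ, card_spacedSubsets_eq f h1 h2 h3 hrec 0, h1, h2]
  | 2 => by
    rw [card_spacedSubsets_succ, card_spacedSubsets_eq f h1 h2 h3 hrec 1,
      card_spacedSubsets_eq f h1 h2 h3 hrec 0, h2, h1, h3]
  | m + 3 => by
    rw [card_spacedSubsets_succ, card_spacedSubsets_eq f h1 h2 h3 hrec (m + 2),
      card_spacedSubsets_eq f h1 h2 h3 hrec (m + 2 - 2), hrec (m + 3 + 1) (by omega),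
      show m + 3 + 1 - 1 = m + 2 + 1 by omega, show m + 3 + 1 - 3 = m + 2 - 2 + 1 by omega]
    ring

theorem mem_erase_empty_spacedSubsets {m : ℕ} {S : Finset ℕ} :
    S ∈ (spacedSubsets m).erase ∅ ↔ S ∈ spacedSubsets m ∧ S.Nonempty := by
  rw [Finset.mem_erase, Finset.nonempty_iff_ne_empty, and_comm]

theorem setOf_isLocallyMinimal_pathAlliance {n : ℕ} (hn : 3 ≤ n) :
    {B : Set ℕ | B ⊆ Set.Iio n ∧ IsLocallyMinimal (IsPathAlliance n) B} =
      insert {0} (insert {n - 1} (dominoes '' ↑((spacedSubsets (n - 3)).erase ∅))) := by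
  ext B
  simp only [Set.mem_insert_iff, Set.mem_image, Finset.mem_coe, mem_erase_empty_spacedSubsets]
  have hsub : B = {0} ∨ B = {n - 1} ∨
      (∃ S, (S ∈ spacedSubsets (n - 3) ∧ S.Nonempty) ∧ dominoes S = B) → B ⊆ Set.Iio n := by
    rintro (rfl | rfl | ⟨S, ⟨hS, -⟩, rfl⟩)
    · exact Set.singleton_subset_iff.2 (Set.mem_Iio.2 (by omega))
    · exact Set.singleton_subset_iff.2 (Set.mem_Iio.2 (by omega))
    · refine (dominoes_subset_Icc (mem_spacedSubsets.1 hS).1).trans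
        fun i ⟨_, hi⟩ => Set.mem_Iio.2 ?_
      omega
  constructor
  · rintro ⟨hB, hLM⟩
    rcases (isLocallyMinimal_pathAlliance_iff hB).1 hLM with h | h | ⟨S, hS, hne, rfl⟩
    exacts [.inl h, .inr (.inl h), .inr (.inr ⟨S, ⟨hS, hne⟩, rfl⟩)]
  · intro h
    refine ⟨hsub h, (isLocallyMinimal_pathAlliance_iff (hsub h)).2 ?_⟩
    rcases h with h | h | ⟨S, ⟨hS, hne⟩, rfl⟩
    exacts [.inl h, .inr (.inl h), .inr (.inr ⟨S, hS, hne, rfl⟩)]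

theorem ncard_setOf_isLocallyMinimal_pathAlliance {n : ℕ} (hn : 3 ≤ n) :
    {B : Set ℕ | B ⊆ Set.Iio n ∧ IsLocallyMinimal (IsPathAlliance n) B}.ncard =
      #(spacedSubsets (n - 3)) + 1 := by
  have hsingle : ∀ c, {c} ∉ dominoes '' ↑((spacedSubsets (n - 3)).erase ∅) := by
    rintro c ⟨S, hS, hSc⟩
    exact Set.not_nontrivial_singleton
      (hSc ▸ dominoes_nontrivial (mem_erase_empty_spacedSubsets.1 hS).2)
  have h0 : ({0} : Set ℕ) ∉ insert {n - 1} (dominoes '' ↑((spacedSubsets (n - 3)).erase ∅)) := by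
    rintro (h | h)
    · have := Set.singleton_eq_singleton_iff.1 h; omega
    · exact hsingle 0 h
  have hinj : Set.InjOn dominoes ↑((spacedSubsets (n - 3)).erase ∅) :=
    IsSpaced.dominoes_injOn.mono fun S hS =>
      (mem_spacedSubsets.1 (mem_erase_empty_spacedSubsets.1 hS).1).2
  have hempty : ∅ ∈ spacedSubsets (n - 3) := by simp [mem_spacedSubsets, IsSpaced]
  rw [setOf_isLocallyMinimal_pathAlliance hn, Set.ncard_insert_of_notMem h0,
    Set.ncard_insert_of_notMem (hsingle _), hinj.ncard_image, Set.ncard_coe_finset,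
    Finset.card_erase_add_one hempty]

/-- With `f_1 = 0`, `f_2 = 1`, `f_3 = 2` and
`f_n = f_{n-1} + f_{n-3} + 1` for `n ≥ 4`, the path `P_n` (for `n ≥ 3`) has
exactly `f_{n-2} + 2` locally minimal defensive alliances. -/
theorem card_locallyMinimalDA_pathGraph (f : ℕ → ℕ)
    (h1 : f 1 = 0) (h2 : f 2 = 1) (h3 : f 3 = 2)
    (hrec : ∀ n, 4 ≤ n → f n = f (n - 1) + f (n - 3) + 1)
    (n : ℕ) (hn : 3 ≤ n) :
    Nat.card {A : Set (Fin n) // IsLocallyMinimalDA (SimpleGraph.pathGraph n) A} =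
      f (n - 2) + 2 := by
  rw [natCard_isLocallyMinimalDA_pathGraph, ncard_setOf_isLocallyMinimal_pathAlliance hn,
    card_spacedSubsets_eq f h1 h2 h3 hrec, show n - 3 + 1 = n - 2 by omega]
end
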